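/- Let (M,d) be a pointed metric space, K > 0, and (x_n, y_n)_{n∈ℕ} a sequence of pairs of points of M such that: (i) x_n ≠ y_n for all n; (ii) x_m ∉ U(y_n, K·d(y_n,x_n)) for all n, m; (iii) the open balls U(y_n, K·d(y_n,x_n)) are pairwise disjoint. Then ℓ∞ embeds isomorphically into Lip_0(M); more precisely, the map T : ℓ∞ → Lip_0(M) defined via T(α)(x) = α(n(x))·f_{n(x)}(x), where f_n(x) = max{d(y_n,x_n) − d(y_n,x)/K, 0} and n(x) is the unique n with f_n(x) ≠ 0 (or 1 if none), satisfies ‖α‖_∞ ≤ ‖T(α)‖_Lip ≤ (2/K)‖α‖_∞ after normalizing so f_n(0)=0. -/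

import Mathlib

/-! Each bump `f_n` is `1/K`-Lipschitz, equals `d(y_n, x_n)` at `y_n` and vanishes off its ball.
Since the balls are disjoint, `T(α)` is the gluing of the functions `α n • f_n`; for two points
in different balls each bump vanishes at the other point, so the increment of `T(α)` splits
into two single-bump increments, each at most `‖α‖ / K` times the distance. The points `x_n`
lie outside all balls, so `T(α)` vanishes there (in particular at the base point `x_0`),
and comparing `T(α)` at `y_n` and `x_n` gives `|α n| ≤ ‖T(α)‖_Lip`. -/

open Metric Set
open scoped NNReal ENNReal

/-- The space of real-valued Lipschitz functions on `M` vanishing at the base point `z`. -/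
structure Lip0 {M : Type*} [MetricSpace M] (z : M) where
  toFun : M → ℝ
  lipschitz' : ∃ K : ℝ≥0, LipschitzWith K toFun
  map_base' : toFun z = 0

namespace Lip0

variable {M : Type*} [MetricSpace M] {z : M}

instance : FunLike (Lip0 z) M ℝ where
  coe := Lip0.toFun
  coe_injective := by rintro ⟨f, _, _⟩ ⟨g, _, _⟩ h; simpa using h

@[simp] lemma coe_mk (f : M → ℝ) (h1 h2) : ⇑(⟨f, h1, h2⟩ : Lip0 z) = f := rfl

lemma map_base (f : Lip0 z) : f z = 0 := f.map_base'

instance : Zero (Lip0 z) := ⟨⟨0, ⟨0, LipschitzWith.const (0 : ℝ)⟩, rfl⟩⟩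

instance : Add (Lip0 z) :=
  ⟨fun f g => ⟨⇑f + ⇑g,
    ⟨f.lipschitz'.choose + g.lipschitz'.choose,
      f.lipschitz'.choose_spec.add g.lipschitz'.choose_spec⟩,
    by simp [map_base f, map_base g]⟩⟩

instance : Neg (Lip0 z) :=
  ⟨fun f => ⟨-⇑f, ⟨f.lipschitz'.choose, f.lipschitz'.choose_spec.neg⟩,
    by simp [map_base f]⟩⟩

lemma lip_const_smul {f : M → ℝ} {K : ℝ≥0} (h : LipschitzWith K f) (c : ℝ) :
    LipschitzWith (‖c‖₊ * K) (c • f) := by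
  rw [lipschitzWith_iff_dist_le_mul] at h ⊢
  intro x y
  calc dist ((c • f) x) ((c • f) y) = ‖c‖ * dist (f x) (f y) := by
        rw [Pi.smul_apply, Pi.smul_apply, dist_smul₀]
    _ ≤ ‖c‖ * (K * dist x y) := by
        apply mul_le_mul_of_nonneg_left (h x y) (norm_nonneg c)
    _ = (‖c‖₊ * K : ℝ≥0) * dist x y := by push_cast; ring

instance : SMul ℝ (Lip0 z) :=
  ⟨fun c f => ⟨c • ⇑f,
    ⟨‖c‖₊ * f.lipschitz'.choose, lip_const_smul f.lipschitz'.choose_spec c⟩,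
    by simp [map_base f]⟩⟩

instance : Sub (Lip0 z) := ⟨fun f g => f + -g⟩
instance : SMul ℕ (Lip0 z) := ⟨fun n f => (n : ℝ) • f⟩
instance : SMul ℤ (Lip0 z) := ⟨fun n f => (n : ℝ) • f⟩

@[simp] lemma coe_zero : ⇑(0 : Lip0 z) = 0 := rfl
@[simp] lemma coe_add (f g : Lip0 z) : ⇑(f + g) = ⇑f + ⇑g := rfl
@[simp] lemma coe_neg (f : Lip0 z) : ⇑(-f) = -⇑f := rfl
@[simp] lemma coe_smul (c : ℝ) (f : Lip0 z) : ⇑(c • f) = c • ⇑f := rfl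
@[simp] lemma coe_sub (f g : Lip0 z) : ⇑(f - g) = ⇑f - ⇑g := by
  show ⇑(f + -g) = _; ext x; simp [sub_eq_add_neg]

instance : AddCommGroup (Lip0 z) :=
  DFunLike.coe_injective.addCommGroup _ coe_zero coe_add coe_neg coe_sub
    (fun f n => by show ⇑((n : ℝ) • f) = _; ext x; simp)
    (fun f n => by show ⇑((n : ℝ) • f) = _; ext x; simp)

instance : Module ℝ (Lip0 z) := by
  refine Function.Injective.module ℝ (AddMonoidHom.mk' (fun (f : Lip0 z) => ⇑f) coe_add) ?_ ?_
  · exact DFunLike.coe_injective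
  · exact coe_smul

/-- The least Lipschitz constant. -/
noncomputable def lipConst (f : M → ℝ) : ℝ≥0 := sInf {K : ℝ≥0 | LipschitzWith K f}

lemma lipschitzWith_lipConst {f : M → ℝ} (h : ∃ K : ℝ≥0, LipschitzWith K f) :
    LipschitzWith (lipConst f) f := by
  rw [lipschitzWith_iff_dist_le_mul]
  intro x y
  rcases eq_or_ne x y with rfl | hxy
  · simp
  have hd : 0 < dist x y := dist_pos.2 hxy
  have h1 : @LE.le ℝ≥0 _ ⟨dist (f x) (f y) / dist x y, by positivity⟩ (lipConst f) := by
    apply le_csInf h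
    intro K hK
    apply NNReal.coe_le_coe.1
    show dist (f x) (f y) / dist x y ≤ (K : ℝ)
    have hK' := lipschitzWith_iff_dist_le_mul.1 hK
    exact (div_le_iff₀ hd).2 (by simpa [mul_comm] using hK' x y)
  replace h1 := NNReal.coe_le_coe.2 h1
  calc dist (f x) (f y) = dist (f x) (f y) / dist x y * dist x y := by field_simp
    _ ≤ (lipConst f : ℝ) * dist x y := by
        apply mul_le_mul_of_nonneg_right _ hd.le
        exact h1



lemma lipConst_le {f : M → ℝ} {K : ℝ≥0} (h : LipschitzWith K f) : lipConst f ≤ K :=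
  csInf_le (OrderBot.bddBelow _) h

lemma dist_le_lipConst (f : Lip0 z) (x y : M) :
    dist (f x) (f y) ≤ (lipConst ⇑f : ℝ) * dist x y :=
  lipschitzWith_iff_dist_le_mul.1 (lipschitzWith_lipConst f.lipschitz') x y

noncomputable instance : Norm (Lip0 z) := ⟨fun f => (lipConst ⇑f : ℝ)⟩

lemma norm_def (f : Lip0 z) : ‖f‖ = (lipConst ⇑f : ℝ) := rfl

lemma eq_zero_of_lipConst_eq_zero (f : Lip0 z) (h : lipConst ⇑f = 0) : f = 0 := by
  apply DFunLike.coe_injective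
  ext x
  have h2 := dist_le_lipConst f x z
  rw [h, map_base f] at h2
  simp only [NNReal.coe_zero, zero_mul] at h2
  have := dist_nonneg (x := f x) (y := (0:ℝ))
  simp only [coe_zero, Pi.zero_apply]
  have : dist (f x) (0:ℝ) = 0 := le_antisymm h2 dist_nonneg
  simpa [dist_eq_norm] using this

lemma lipConst_smul (c : ℝ) (f : Lip0 z) : lipConst ⇑(c • f) = ‖c‖₊ * lipConst ⇑f := by
  have le1 : ∀ (c : ℝ) (f : Lip0 z), lipConst ⇑(c • f) ≤ ‖c‖₊ * lipConst ⇑f := by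
    intro c f
    exact lipConst_le (lip_const_smul (lipschitzWith_lipConst f.lipschitz') c)
  rcases eq_or_ne c 0 with rfl | hc
  · simp only [nnnorm_zero, zero_mul]
    refine le_antisymm ?_ zero_le
    have : (0:ℝ) • f = (0 : Lip0 z) := zero_smul ℝ f
    calc lipConst ⇑((0:ℝ) • f) ≤ ‖(0:ℝ)‖₊ * lipConst ⇑f := le1 0 f
      _ = 0 := by simp
  · refine le_antisymm (le1 c f) ?_
    have h2 := le1 c⁻¹ (c • f)
    rw [inv_smul_smul₀ hc] at h2
    have hcpos : (0:ℝ≥0) < ‖c‖₊ := by simpa using hc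
    calc ‖c‖₊ * lipConst ⇑f ≤ ‖c‖₊ * (‖c⁻¹‖₊ * lipConst ⇑(c • f)) := by
          exact mul_le_mul_of_nonneg_left h2 zero_le
      _ = lipConst ⇑(c • f) := by
          rw [← mul_assoc]
          have : ‖c‖₊ * ‖c⁻¹‖₊ = 1 := by
            rw [← nnnorm_mul, mul_inv_cancel₀ hc, nnnorm_one]
          rw [this, one_mul]

noncomputable def addGroupNorm (z : M) : AddGroupNorm (Lip0 z) where
  toFun f := (lipConst ⇑f : ℝ)
  map_zero' := by
    simp only [coe_zero]
    norm_cast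
    exact le_antisymm (lipConst_le (LipschitzWith.const' (0:ℝ))) zero_le
  add_le' f g := by
    push_cast
    have : lipConst ⇑(f + g) ≤ lipConst ⇑f + lipConst ⇑g := by
      refine lipConst_le ?_
      exact (lipschitzWith_lipConst f.lipschitz').add (lipschitzWith_lipConst g.lipschitz')
    exact_mod_cast this
  neg' f := by
    have h : (-⇑f : M → ℝ) = ⇑((-1 : ℝ) • f) := by ext x; simp
    show (lipConst ⇑(-f) : ℝ) = (lipConst ⇑f : ℝ)
    rw [coe_neg, h, lipConst_smul]
    simp
  eq_zero_of_map_eq_zero' f h := by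
    apply eq_zero_of_lipConst_eq_zero
    have h' : (lipConst ⇑f : ℝ) = 0 := h
    exact_mod_cast h'

noncomputable instance : NormedAddCommGroup (Lip0 z) :=
  (addGroupNorm z).toNormedAddCommGroup

noncomputable instance : NormedSpace ℝ (Lip0 z) where
  norm_smul_le c f := by
    show (lipConst ⇑(c • f) : ℝ) ≤ ‖c‖ * (lipConst ⇑f : ℝ)
    rw [lipConst_smul, NNReal.coe_mul, coe_nnnorm]

end Lip0

section FreeSpace

variable {M : Type*} [MetricSpace M]

/-- The evaluation functional `δ_x ∈ Lip_0(M)^*`. -/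
noncomputable def dirac (z x : M) : StrongDual ℝ (Lip0 z) :=
  LinearMap.mkContinuous
    { toFun := fun f => f x
      map_add' := by intro f g; simp
      map_smul' := by intro c f; simp }
    (dist x z)
    (by
      intro f
      have := Lip0.dist_le_lipConst f x z
      rw [Lip0.map_base f, dist_zero_right] at this
      show |f x| ≤ dist x z * (Lip0.lipConst ⇑f : ℝ)
      simpa [mul_comm] using this)

@[simp] lemma dirac_apply (z x : M) (f : Lip0 z) : dirac z x f = f x := rfl

/-- The Lipschitz-free space over `M` with base point `z`: the closed linear span of
the evaluation functionals inside `Lip_0(M)^*`. -/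
noncomputable def FreeSpace (z : M) : Submodule ℝ (StrongDual ℝ (Lip0 z)) :=
  (Submodule.span ℝ (Set.range (dirac z))).topologicalClosure

/-- The canonical embedding `δ : M → F(M)`. -/
noncomputable def diracF (z x : M) : FreeSpace z :=
  ⟨dirac z x, Submodule.le_topologicalClosure _ (Submodule.subset_span ⟨x, rfl⟩)⟩

end FreeSpace

section Statement6

variable {M : Type*} [MetricSpace M]

/-- The bump function `f_n` of the lemma. -/
noncomputable def bumpFn (K : ℝ) (x y : ℕ → M) (n : ℕ) (t : M) : ℝ :=
  max (dist (y n) (x n) - dist (y n) t / K) 0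

open scoped Classical in
/-- `n(t)`: the unique `n` with `f_n(t) ≠ 0` if it exists, and `0` otherwise. -/
noncomputable def bumpIdx (K : ℝ) (x y : ℕ → M) (t : M) : ℕ :=
  if h : ∃ n, bumpFn K x y n t ≠ 0 then h.choose else 0

/-- The map `T : ℓ_∞ → Lip_0(M)` (as a map into functions). -/
noncomputable def Tmap (K : ℝ) (x y : ℕ → M) (α : lp (fun _ : ℕ => ℝ) ∞) (t : M) : ℝ :=
  α (bumpIdx K x y t) * bumpFn K x y (bumpIdx K x y t) t

theorem lipschitzWith_glue_of_disjoint_support {ι X : Type*} [PseudoMetricSpace X]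
    {g : ι → X → ℝ} {c : ι → ℝ} {idx : X → ι} {C L : ℝ≥0}
    (hc : ∀ i, |c i| ≤ C) (hg : ∀ i, LipschitzWith L (g i))
    (hidx : ∀ i t, g i t ≠ 0 → idx t = i) :
    LipschitzWith (2 * C * L) fun t => c (idx t) * g (idx t) t := by
  refine LipschitzWith.of_dist_le_mul fun s t => ?_
  have hterm : ∀ i, |c i * (g i s - g i t)| ≤ C * L * dist s t := fun i => by
    rw [abs_mul, mul_assoc, ← Real.dist_eq]
    exact mul_le_mul (hc i) ((hg i).dist_le_mul s t) dist_nonneg C.coe_nonneg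
  have hCL : 0 ≤ (C * L : ℝ) * dist s t := by positivity
  rw [NNReal.coe_mul, NNReal.coe_mul, NNReal.coe_two, Real.dist_eq]
  by_cases hst : idx s = idx t
  · have hsplit : c (idx s) * g (idx s) s - c (idx t) * g (idx t) t
        = c (idx s) * (g (idx s) s - g (idx s) t) := by rw [← hst]; ring
    rw [hsplit]
    linarith [hterm (idx s)]
  · have hs : g (idx t) s = 0 := by_contra fun h => hst (hidx _ s h)
    have ht : g (idx s) t = 0 := by_contra fun h => hst (hidx _ t h).symm
    have hsplit : c (idx s) * g (idx s) s - c (idx t) * g (idx t) t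
        = c (idx s) * (g (idx s) s - g (idx s) t) + c (idx t) * (g (idx t) s - g (idx t) t) := by
      rw [hs, ht]; ring
    rw [hsplit]
    linarith [abs_add_le (c (idx s) * (g (idx s) s - g (idx s) t))
      (c (idx t) * (g (idx t) s - g (idx t) t)), hterm (idx s), hterm (idx t)]

theorem lipschitzWith_bumpFn (K : ℝ) (x y : ℕ → M) (n : ℕ) :
    LipschitzWith ‖K‖₊⁻¹ (bumpFn K x y n) := by
  have h := ((LipschitzWith.const (dist (y n) (x n))).sub
    (Lip0.lip_const_smul (LipschitzWith.dist_right (y n)) K⁻¹)).max_const 0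
  simp only [nnnorm_inv, mul_one, zero_add] at h
  convert h using 2 with t
  simp [bumpFn, div_eq_inv_mul]

theorem bumpFn_ne_zero_iff {K : ℝ} (hK : 0 < K) (x y : ℕ → M) (n : ℕ) (t : M) :
    bumpFn K x y n t ≠ 0 ↔ t ∈ ball (y n) (K * dist (y n) (x n)) := by
  rw [bumpFn, mem_ball', Ne, max_eq_right_iff, not_le, sub_pos, div_lt_iff₀' hK]


theorem bumpFn_self (K : ℝ) (x y : ℕ → M) (n : ℕ) : bumpFn K x y n (y n) = dist (y n) (x n) := by
  simp [bumpFn]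

theorem bumpIdx_eq_of_bumpFn_ne_zero {K : ℝ} (hK : 0 < K) {x y : ℕ → M}
    (hdisj : ∀ n m, n ≠ m →
      Disjoint (ball (y n) (K * dist (y n) (x n))) (ball (y m) (K * dist (y m) (x m))))
    {n : ℕ} {t : M} (h : bumpFn K x y n t ≠ 0) : bumpIdx K x y t = n := by
  have hex : ∃ m, bumpFn K x y m t ≠ 0 := ⟨n, h⟩
  rw [bumpIdx, dif_pos hex]
  by_contra hne
  exact Set.disjoint_left.1 (hdisj _ n hne)
    ((bumpFn_ne_zero_iff hK x y _ t).1 hex.choose_spec) ((bumpFn_ne_zero_iff hK x y n t).1 h)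

theorem Tmap_apply_center {K : ℝ} (hK : 0 < K) {x y : ℕ → M} (hneq : ∀ n, x n ≠ y n)
    (hdisj : ∀ n m, n ≠ m →
      Disjoint (ball (y n) (K * dist (y n) (x n))) (ball (y m) (K * dist (y m) (x m))))
    (α : lp (fun _ : ℕ => ℝ) ∞) (n : ℕ) : Tmap K x y α (y n) = α n * dist (y n) (x n) := by
  have hidx : bumpIdx K x y (y n) = n := bumpIdx_eq_of_bumpFn_ne_zero hK hdisj <| by
    rw [bumpFn_self]
    exact (dist_pos.2 (hneq n).symm).ne'
  rw [Tmap, hidx, bumpFn_self]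

theorem Tmap_eq_zero_of_forall_notMem_ball {K : ℝ} (hK : 0 < K) {x y : ℕ → M} {t : M}
    (ht : ∀ n, t ∉ ball (y n) (K * dist (y n) (x n))) (α : lp (fun _ : ℕ => ℝ) ∞) :
    Tmap K x y α t = 0 := by
  have h : bumpFn K x y (bumpIdx K x y t) t = 0 :=
    by_contra fun h => ht _ ((bumpFn_ne_zero_iff hK x y _ t).1 h)
  rw [Tmap, h, mul_zero]

theorem lipschitzWith_Tmap {K : ℝ} (hK : 0 < K) {x y : ℕ → M}
    (hdisj : ∀ n m, n ≠ m →
      Disjoint (ball (y n) (K * dist (y n) (x n))) (ball (y m) (K * dist (y m) (x m))))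
    (α : lp (fun _ : ℕ => ℝ) ∞) : LipschitzWith (2 * ‖α‖₊ * ‖K‖₊⁻¹) (Tmap K x y α) :=
  lipschitzWith_glue_of_disjoint_support
    (fun n => by simpa using lp.norm_apply_le_norm ENNReal.top_ne_zero α n)
    (lipschitzWith_bumpFn K x y) (fun _ _ h => bumpIdx_eq_of_bumpFn_ne_zero hK hdisj h)

theorem norm_le_lipConst_Tmap {K : ℝ} (hK : 0 < K) {x y : ℕ → M} (hneq : ∀ n, x n ≠ y n)
    (hnotin : ∀ n m, x m ∉ ball (y n) (K * dist (y n) (x n)))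
    (hdisj : ∀ n m, n ≠ m →
      Disjoint (ball (y n) (K * dist (y n) (x n))) (ball (y m) (K * dist (y m) (x m))))
    (α : lp (fun _ : ℕ => ℝ) ∞) : ‖α‖ ≤ Lip0.lipConst (Tmap K x y α) := by
  refine lp.norm_le_of_forall_le (NNReal.coe_nonneg _) fun n => ?_
  have hd : 0 < dist (y n) (x n) := dist_pos.2 (hneq n).symm
  have h := (Lip0.lipschitzWith_lipConst ⟨_, lipschitzWith_Tmap hK hdisj α⟩).dist_le_mul (y n) (x n)
  rw [Tmap_apply_center hK hneq hdisj, Tmap_eq_zero_of_forall_notMem_ball hK (hnotin · n),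
    Real.dist_eq, sub_zero, abs_mul, abs_of_pos hd] at h
  exact le_of_mul_le_mul_right h hd

/-- under conditions (i), (ii), (iii), the map `T` is an isomorphic embedding of
`ℓ_∞` into `Lip_0(M)` with `‖α‖_∞ ≤ ‖T(α)‖_Lip ≤ (2/K) ‖α‖_∞`. -/
theorem ell_infty_embeds_into_lip0 (z : M) (K : ℝ) (hK : 0 < K) (x y : ℕ → M)
    (hbase : z = x 0)
    (hneq : ∀ n, x n ≠ y n)
    (hnotin : ∀ n m, x m ∉ Metric.ball (y n) (K * dist (y n) (x n)))
    (hdisj : ∀ n m, n ≠ m →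
      Disjoint (Metric.ball (y n) (K * dist (y n) (x n)))
        (Metric.ball (y m) (K * dist (y m) (x m)))) :
    ∀ α : lp (fun _ : ℕ => ℝ) ∞,
      (∃ Kc : ℝ≥0, LipschitzWith Kc (Tmap K x y α)) ∧ Tmap K x y α z = 0 ∧
      ‖α‖ ≤ (Lip0.lipConst (Tmap K x y α) : ℝ) ∧
      (Lip0.lipConst (Tmap K x y α) : ℝ) ≤ (2 / K) * ‖α‖ := by
  intro α
  have hlip := lipschitzWith_Tmap hK hdisj α
  refine ⟨⟨_, hlip⟩, hbase ▸ Tmap_eq_zero_of_forall_notMem_ball hK (hnotin · 0) α,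
    norm_le_lipConst_Tmap hK hneq hnotin hdisj α, ?_⟩
  calc (Lip0.lipConst (Tmap K x y α) : ℝ) ≤ (2 * ‖α‖₊ * ‖K‖₊⁻¹ : ℝ≥0) :=
        NNReal.coe_le_coe.2 (Lip0.lipConst_le hlip)
    _ = 2 / K * ‖α‖ := by
        rw [NNReal.coe_mul, NNReal.coe_mul, NNReal.coe_inv, NNReal.coe_two, coe_nnnorm, coe_nnnorm,
          Real.norm_of_nonneg hK.le]
        ring

end Statement6
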